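/- Front spinning preserves exactness (part of Proposition 1.4, Formula (4.10) in the paper): let n ≥ 1, let E be a real normed vector space, and let g : E → ℝ × ℝ^{2n+1} have differentiable component functions t, x_1, y_1, …, x_n, y_n, z. Suppose there exists a differentiable function h : E → ℝ with Dh(p)(v) = e^{t(p)}·(Dz(p)(v) − Σ_{i=1}^{n} y_i(p)·Dx_i(p)(v)) for all p ∈ E and v ∈ E (i.e., dh = g*(e^t α_n)). Then the function H : E × ℝ → ℝ defined by H(p, θ) := h(p) is differentiable and satisfies DH(p,θ)(v,s) = e^{T(p,θ)}·(DZ(p,θ)(v,s) − Σ_{i=0}^{n} Y_i(p,θ)·DX_i(p,θ)(v,s)) for all (p,θ) and (v,s), where (T, X_0, Y_0, …, X_n, Y_n, Z) are the component functions of Σg; that is, dH = (Σg)*(e^t α_{n+1}), so the front spinning of an exact Lagrangian parametrization is exact. -/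

import Mathlib

/-!
Front spinning preserves exactness (Formula (4.10) in the paper).

Coordinates on `ℝ × ℝ^{2n+1}` are `(t, x_1, y_1, …, x_n, y_n, z)`; a map
`g : E → ℝ × ℝ^{2n+1}` is given by its component functions
`t, x_1, y_1, …, x_n, y_n, z : E → ℝ`.

The front spinning `Σg : E × ℝ → ℝ × ℝ^{2n+3}` has component functions
`T = t`, `X_0 = x_1 sin θ`, `Y_0 = y_1 sin θ`, `X_1 = x_1 cos θ`,
`Y_1 = y_1 cos θ`, `X_i = x_i`, `Y_i = y_i` for `i ≥ 2`, and `Z = z`.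

The primitive 1-form `e^t α` at a point `q` sends a vector `u` to
`e^{t(q)}·(u_z − Σ y_i(q)·u_{x_i})`; a Lagrangian parametrization is exact
when the pullback of `e^t α` admits a global primitive function.
-/

/-- The `x`-component functions of the front-spun map. -/
noncomputable def spinX {E : Type*} (x : ℕ → E → ℝ) : ℕ → E × ℝ → ℝ
  | 0 => fun q => x 1 q.1 * Real.sin q.2
  | 1 => fun q => x 1 q.1 * Real.cos q.2
  | (i + 2) => fun q => x (i + 2) q.1

/-- The `y`-component functions of the front-spun map. -/
noncomputable def spinY {E : Type*} (y : ℕ → E → ℝ) : ℕ → E × ℝ → ℝ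
  | 0 => fun q => y 1 q.1 * Real.sin q.2
  | 1 => fun q => y 1 q.1 * Real.cos q.2
  | (i + 2) => fun q => y (i + 2) q.1

/-- The `z`-component function of the front-spun map. -/
def spinZ {E : Type*} (z : E → ℝ) : E × ℝ → ℝ := fun q => z q.1

/-- The `t`-component function of the front-spun cobordism. -/
def spinT {E : Type*} (t : E → ℝ) : E × ℝ → ℝ := fun q => t q.1

/-!
Only the first coordinate pair is rotated, and the rotation preserves the Liouville form:
`(y sin θ) d(x sin θ) + (y cos θ) d(x cos θ) = y dx`, since the `dθ`-terms cancel and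
`sin² θ + cos² θ = 1`. So `(Σg)^*(e^t α_{n+1})` is the pullback of `g^*(e^t α_n)` under the
projection `E × ℝ → E`, whose primitive is `h ∘ Prod.fst`.
-/

section Calculus

variable {E F G : Type*} [NormedAddCommGroup E] [NormedSpace ℝ E]
  [NormedAddCommGroup F] [NormedSpace ℝ F] [NormedAddCommGroup G] [NormedSpace ℝ G]

lemma fderiv_comp_fst_apply {f : E → G} {p : E} (hf : DifferentiableAt ℝ f p) (w : F)
    (v : E) (s : F) :
    fderiv ℝ (fun q : E × F => f q.1) (p, w) (v, s) = fderiv ℝ f p v := by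
  have hfst := hf.hasFDerivAt.comp (p, w) (hasFDerivAt_fst (𝕜 := ℝ) (F := F))
  rw [HasFDerivAt.fderiv (f := fun q : E × F => f q.1) hfst]
  rfl

lemma fderiv_mul_comp_snd_apply {f : E → ℝ} {g : ℝ → ℝ} {p : E} {θ g' : ℝ}
    (hf : DifferentiableAt ℝ f p) (hg : HasDerivAt g g' θ) (v : E) (s : ℝ) :
    fderiv ℝ (fun q : E × ℝ => f q.1 * g q.2) (p, θ) (v, s) =
      fderiv ℝ f p v * g θ + f p * (g' * s) := by
  have hf' := hf.hasFDerivAt.comp (p, θ) (hasFDerivAt_fst (𝕜 := ℝ) (F := ℝ))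
  have hg' := hg.comp_hasFDerivAt (p, θ) (hasFDerivAt_snd (𝕜 := ℝ) (E := E))
  rw [HasFDerivAt.fderiv (f := fun q : E × ℝ => f q.1 * g q.2) (hf'.mul hg')]
  simp only [add_apply, smul_apply, ContinuousLinearMap.comp_apply,
    ContinuousLinearMap.coe_fst', ContinuousLinearMap.coe_snd', Function.comp_apply, smul_eq_mul]
  ring

end Calculus

section Spinning

variable {E : Type*} [NormedAddCommGroup E] [NormedSpace ℝ E]

lemma spinY_mul_fderiv_spinX_zero_add_one (x y : ℕ → E → ℝ) {p : E}
    (hx : DifferentiableAt ℝ (x 1) p) (θ : ℝ) (v : E) (s : ℝ) :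
    spinY y 0 (p, θ) * fderiv ℝ (spinX x 0) (p, θ) (v, s) +
        spinY y 1 (p, θ) * fderiv ℝ (spinX x 1) (p, θ) (v, s) =
      y 1 p * fderiv ℝ (x 1) p v := by
  have hsin := fderiv_mul_comp_snd_apply hx (Real.hasDerivAt_sin θ) v s
  have hcos := fderiv_mul_comp_snd_apply hx (Real.hasDerivAt_cos θ) v s
  simp only [spinX, spinY] at hsin hcos ⊢
  rw [hsin, hcos]
  linear_combination y 1 p * fderiv ℝ (x 1) p v * Real.sin_sq_add_cos_sq θ

lemma sum_spinY_mul_fderiv_spinX {n : ℕ} (hn : 1 ≤ n) (x y : ℕ → E → ℝ) {p : E}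
    (hx : ∀ i ∈ Finset.Icc 1 n, DifferentiableAt ℝ (x i) p) (θ : ℝ) (v : E) (s : ℝ) :
    ∑ i ∈ Finset.Icc 0 n, spinY y i (p, θ) * fderiv ℝ (spinX x i) (p, θ) (v, s) =
      ∑ i ∈ Finset.Icc 1 n, y i p * fderiv ℝ (x i) p v := by
  have hx1 : DifferentiableAt ℝ (x 1) p := hx 1 (Finset.mem_Icc.mpr ⟨le_rfl, hn⟩)
  have htail : ∑ i ∈ Finset.Ioc 1 n, spinY y i (p, θ) * fderiv ℝ (spinX x i) (p, θ) (v, s) =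
      ∑ i ∈ Finset.Ioc 1 n, y i p * fderiv ℝ (x i) p v := by
    refine Finset.sum_congr rfl fun i hi => ?_
    obtain ⟨hi1, hin⟩ := Finset.mem_Ioc.mp hi
    obtain ⟨j, rfl⟩ : ∃ j, i = j + 2 := ⟨i - 2, by omega⟩
    exact congrArg _ (fderiv_comp_fst_apply (hx _ (Finset.mem_Icc.mpr ⟨by omega, hin⟩)) θ v s)
  have hsplit (f : ℕ → ℝ) :
      ∑ i ∈ Finset.Icc 0 n, f i = f 0 + (f 1 + ∑ i ∈ Finset.Ioc 1 n, f i) := by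
    rw [← Finset.add_sum_Ioc_eq_sum_Icc n.zero_le, ← Finset.Icc_add_one_left_eq_Ioc, zero_add,
      ← Finset.add_sum_Ioc_eq_sum_Icc hn]
  rw [hsplit, ← Finset.add_sum_Ioc_eq_sum_Icc hn, ← add_assoc,
    spinY_mul_fderiv_spinX_zero_add_one x y hx1, htail]

end Spinning

theorem front_spinning_preserves_exactness_general
    {E : Type*} [NormedAddCommGroup E] [NormedSpace ℝ E]
    (n : ℕ) (hn : 1 ≤ n) (t : E → ℝ) (x y : ℕ → E → ℝ) (z : E → ℝ)
    (hx : ∀ i ∈ Finset.Icc 1 n, Differentiable ℝ (x i))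
    (hz : Differentiable ℝ z)
    (h : E → ℝ) (hh : Differentiable ℝ h)
    (hprim : ∀ (p : E) (v : E),
      fderiv ℝ h p v =
        Real.exp (t p) *
          (fderiv ℝ z p v - ∑ i ∈ Finset.Icc 1 n, y i p * fderiv ℝ (x i) p v)) :
    Differentiable ℝ (fun q : E × ℝ => h q.1) ∧
    ∀ (p : E) (θ : ℝ) (v : E) (s : ℝ),
      fderiv ℝ (fun q : E × ℝ => h q.1) (p, θ) (v, s) =
        Real.exp (spinT t (p, θ)) *
          (fderiv ℝ (spinZ z) (p, θ) (v, s) -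
            ∑ i ∈ Finset.Icc 0 n, spinY y i (p, θ) * fderiv ℝ (spinX x i) (p, θ) (v, s)) := by
  refine ⟨hh.comp differentiable_fst, fun p θ v s => ?_⟩
  unfold spinZ spinT
  rw [fderiv_comp_fst_apply (hh p), hprim, fderiv_comp_fst_apply (hz p),
    sum_spinY_mul_fderiv_spinX hn x y (fun i hi => hx i hi p)]

/-- **Front spinning preserves exactness** (Formula (4.10) in the paper).
If `g : E → ℝ × ℝ^{2n+1}` has differentiable component functions and there is
a differentiable `h : E → ℝ` with `dh = g^*(e^t α_n)`, then
`H(p, θ) := h(p)` is differentiable and `dH = (Σg)^*(e^t α_{n+1})`: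
`DH(p,θ)(v,s) = e^{T(p,θ)}·(DZ(p,θ)(v,s) − Σ_{i=0}^{n} Y_i(p,θ)·DX_i(p,θ)(v,s))`. -/
theorem front_spinning_preserves_exactness
    {E : Type*} [NormedAddCommGroup E] [NormedSpace ℝ E]
    (n : ℕ) (hn : 1 ≤ n) (t : E → ℝ) (x y : ℕ → E → ℝ) (z : E → ℝ)
    (ht : Differentiable ℝ t)
    (hx : ∀ i ∈ Finset.Icc 1 n, Differentiable ℝ (x i))
    (hy : ∀ i ∈ Finset.Icc 1 n, Differentiable ℝ (y i))
    (hz : Differentiable ℝ z)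
    (h : E → ℝ) (hh : Differentiable ℝ h)
    (hprim : ∀ (p : E) (v : E),
      fderiv ℝ h p v =
        Real.exp (t p) *
          (fderiv ℝ z p v - ∑ i ∈ Finset.Icc 1 n, y i p * fderiv ℝ (x i) p v)) :
    Differentiable ℝ (fun q : E × ℝ => h q.1) ∧
    ∀ (p : E) (θ : ℝ) (v : E) (s : ℝ),
      fderiv ℝ (fun q : E × ℝ => h q.1) (p, θ) (v, s) =
        Real.exp (spinT t (p, θ)) *
          (fderiv ℝ (spinZ z) (p, θ) (v, s) -
            ∑ i ∈ Finset.Icc 0 n, spinY y i (p, θ) * fderiv ℝ (spinX x i) (p, θ) (v, s)) :=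
  front_spinning_preserves_exactness_general n hn t x y z hx hz h hh hprim
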